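/- Let s_1,…,s_k be supply vectors on a capacitated undirected graph G=(V,E,c), let θ = max_{1≤i≤k} |{v∈V : s_i(v)<0}| be the largest number of sources of any supply vector, and for each i let w_i ∈ argmax_{v∈V} |s_i(v)| be a master source of s_i. Then λ(G; s_1∘w_1,…,s_k∘w_k) ≥ λ(G; s_1,…,s_k) / max{θ−1, 1}; that is, choosing master sources as targets is a max{θ−1,1}-approximate solution. -/

import Mathlib

open Finset

/-- A flow `f` on an (arbitrarily oriented) undirected graph satisfies the
demand vector `d` if at every vertex the net inflow equals the demand. -/
def satisfiesFlow {V E : Type*} [Fintype E] [DecidableEq V]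
    (hd tl : E → V) (f : E → ℝ) (d : V → ℝ) : Prop :=
  ∀ v : V, d v = (∑ e : E, if hd e = v then f e else 0)
      - (∑ e : E, if tl e = v then f e else 0)

/-- `assign s v` is the demand vector `s ∘ v` obtained from the supply vector `s`
by making `v` the target: it agrees with `s` off `v` and has value
`-∑_{u ≠ v} s u` at `v`. -/
def assign {V : Type*} [Fintype V] [DecidableEq V] (s : V → ℝ) (v : V) : V → ℝ :=
  fun u => if u = v then -(∑ w ∈ univ.erase v, s w) else s u

/-- The optimum of the maximum concurrent multi-commodity flow problem for
demand vectors `d i` on the capacitated graph given by `hd`, `tl`, `c`: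
the largest `l ≥ 0` such that some valid multi-commodity flow satisfies `l • d i`
for all `i`. -/
noncomputable def lamD {V E ι : Type*} [Fintype V] [Fintype E] [Fintype ι] [DecidableEq V]
    (hd tl : E → V) (c : E → ℝ) (d : ι → V → ℝ) : ℝ :=
  sSup {l : ℝ | 0 ≤ l ∧ ∃ f : ι → E → ℝ,
    (∀ e, ∑ i, |f i e| ≤ c e) ∧
    ∀ i, satisfiesFlow hd tl (f i) (fun v => l * d i v)}

/-- The optimum of the target location problem LoMuF for supply vectors `s i`:
the best value of `lamD` over all choices of targets. -/
noncomputable def lamS {V E ι : Type*} [Fintype V] [Fintype E] [Fintype ι] [DecidableEq V]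
    (hd tl : E → V) (c : E → ℝ) (s : ι → V → ℝ) : ℝ :=
  sSup {l : ℝ | 0 ≤ l ∧ ∃ (v : ι → V) (f : ι → E → ℝ),
    (∀ e, ∑ i, |f i e| ≤ c e) ∧
    ∀ i, satisfiesFlow hd tl (f i) (fun u => l * assign (s i) (v i) u)}

/-!
Fix optimal targets `v i` and flows `f i`. For a commodity with supply `s`, total supply `T` and
master source `w ≠ v`, flow decomposition yields a flow `h`, edgewise between `0` and `f`, that
carries the supply `|s w|` of `w` to `v`. Then `f - α • h` with `α = T / |s w| ≤ θ` routes
`s ∘ w` instead of `s ∘ v`, and it is edgewise at most `max (α - 1) 1 ≤ max (θ - 1) 1` times `f`.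
Scaling every commodity down by `max (θ - 1) 1` restores the capacity constraints.
-/

open scoped Interval

theorem add_mem_uIcc_zero {a b c : ℝ} (ha : a ∈ [[0, c]]) (hb : b ∈ [[0, c - a]]) :
    a + b ∈ [[0, c]] := by
  simp only [Set.mem_uIcc] at *
  rcases ha with ⟨_, _⟩ | ⟨_, _⟩ <;> rcases hb with ⟨_, _⟩ | ⟨_, _⟩ <;>
    first
    | exact .inl ⟨by linarith, by linarith⟩
    | exact .inr ⟨by linarith, by linarith⟩

theorem mul_mem_uIcc_zero_mul {ε r : ℝ} (x : ℝ) (hε : 0 ≤ ε) (hεr : ε ≤ r) :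
    ε * x ∈ [[0, r * x]] := by
  simpa [Set.image_mul_const_uIcc] using
    Set.mem_image_of_mem (· * x) (Set.mem_uIcc_of_le hε hεr)

theorem abs_sub_mul_le_of_mem_uIcc {x y α : ℝ} (hy : y ∈ [[0, x]]) (hα : 0 ≤ α) :
    |x - α * y| ≤ max (α - 1) 1 * |x| := by
  have h1 : 1 ≤ max (α - 1) 1 := le_max_right _ _
  have h2 : α - 1 ≤ max (α - 1) 1 := le_max_left _ _
  rw [abs_le]
  rcases Set.mem_uIcc.1 hy with ⟨hy0, hyx⟩ | ⟨hxy, hy0⟩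
  · rw [abs_of_nonneg (hy0.trans hyx)]
    constructor <;> nlinarith
  · rw [abs_of_nonpos (hxy.trans hy0)]
    constructor <;> nlinarith

theorem sSup_div_le_sSup {A B : Set ℝ} {M : ℝ} (hM : 0 < M) (hB : ∀ x ∈ B, 0 ≤ x)
    (hBA : B ⊆ A) (hAB : ∀ x ∈ A, x / M ∈ B) : sSup A / M ≤ sSup B := by
  by_cases hBbdd : BddAbove B
  · rw [div_le_iff₀ hM]
    refine Real.sSup_le (fun x hx => ?_) (mul_nonneg (Real.sSup_nonneg hB) hM.le)
    exact (div_le_iff₀ hM).1 (le_csSup hBbdd (hAB x hx))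
  · rw [Real.sSup_of_not_bddAbove hBbdd,
      Real.sSup_of_not_bddAbove fun hA => hBbdd (hA.mono hBA), zero_div]

theorem exists_scaled_subflow {E : Type*} [Fintype E] {f p : E → ℝ} (hpf : ∀ e, 0 ≤ p e * f e)
    (hp0 : ∀ e, f e = 0 → p e = 0) {δ : ℝ} (hδ : 0 < δ) :
    ∃ ε, 0 < ε ∧ ε ≤ δ ∧ (∀ e, ε * p e ∈ [[0, f e]]) ∧
      (ε = δ ∨ ∃ e, f e ≠ 0 ∧ ε * p e = f e) := by
  classical
  set S : Finset E := {e | p e ≠ 0}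
  rcases S.eq_empty_or_nonempty with hS | hS
  · have hp : ∀ e, p e = 0 := fun e => by simpa [S] using filter_eq_empty_iff.1 hS (mem_univ e)
    exact ⟨δ, hδ, le_rfl, fun e => by simp [hp], .inl rfl⟩
  have hratio : ∀ e ∈ S, 0 < f e / p e := fun e he => by
    have hp : p e ≠ 0 := (mem_filter.1 he).2
    have hpf' : 0 < p e * f e := (hpf e).lt_of_ne (mul_ne_zero hp fun h => hp (hp0 e h)).symm
    rcases hp.lt_or_gt with hneg | hpos
    · exact div_pos_of_neg_of_neg (by nlinarith) hneg
    · exact div_pos (by nlinarith) hpos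
  set r := S.inf' hS fun e => f e / p e
  have hr : 0 < r := (lt_inf'_iff hS).2 hratio
  refine ⟨min δ r, lt_min hδ hr, min_le_left _ _, fun e => ?_, ?_⟩
  · by_cases hpe : p e = 0
    · simp [hpe]
    have he : e ∈ S := by simp [S, hpe]
    simpa [div_mul_cancel₀ _ hpe] using mul_mem_uIcc_zero_mul (p e) (lt_min hδ hr).le
      ((min_le_right _ _).trans (inf'_le _ he))
  · rcases min_choice δ r with h | h
    · exact .inl h
    obtain ⟨e, he, hre⟩ : ∃ e ∈ S, r = f e / p e := exists_mem_eq_inf' hS _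
    have hpe : p e ≠ 0 := (mem_filter.1 he).2
    refine .inr ⟨e, fun hf => (hratio e he).ne' (by simp [hf]), ?_⟩
    rw [h, hre, div_mul_cancel₀ _ hpe]

section Flows

variable {V E : Type*} [Fintype E] [DecidableEq V] (hd tl : E → V)

def netFlow : (E → ℝ) →ₗ[ℝ] V → ℝ where
  toFun f v := (∑ e, if hd e = v then f e else 0) - ∑ e, if tl e = v then f e else 0
  map_add' f g := by
    ext v
    simp only [Pi.add_apply, ite_add_zero, sum_add_distrib]
    ring
  map_smul' a f := by
    ext v
    simp only [Pi.smul_apply, smul_eq_mul, RingHom.id_apply, mul_sub, mul_sum, mul_ite, mul_zero]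

theorem satisfiesFlow_iff {f : E → ℝ} {d : V → ℝ} :
    satisfiesFlow hd tl f d ↔ netFlow hd tl f = d :=
  funext_iff.symm.trans eq_comm

theorem netFlow_single [DecidableEq E] (e : E) (a : ℝ) :
    netFlow hd tl (Pi.single e a) = Pi.single (hd e) a - Pi.single (tl e) a := by
  ext x
  simp only [netFlow, LinearMap.coe_mk, AddHom.coe_mk, Pi.sub_apply]
  rw [Fintype.sum_eq_single e (fun e' h => by simp [h]),
    Fintype.sum_eq_single e (fun e' h => by simp [h])]
  simp [Pi.single_apply, eq_comm]

theorem sum_netFlow (f : E → ℝ) (R : Finset V) :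
    ∑ x ∈ R, netFlow hd tl f x
      = ∑ e, ((if hd e ∈ R then f e else 0) - if tl e ∈ R then f e else 0) := by
  simp only [netFlow, LinearMap.coe_mk, AddHom.coe_mk, sum_sub_distrib]
  rw [sum_comm, sum_comm (s := R)]
  simp [sum_ite_eq]

def FlowStep (f : E → ℝ) (u u' : V) : Prop :=
  ∃ e, (0 < f e ∧ tl e = u ∧ hd e = u') ∨ (f e < 0 ∧ hd e = u ∧ tl e = u')

theorem sum_netFlow_nonneg_of_closed {f : E → ℝ} {R : Finset V}
    (hR : ∀ u u', FlowStep hd tl f u u' → u ∈ R → u' ∈ R) :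
    0 ≤ ∑ x ∈ R, netFlow hd tl f x := by
  rw [sum_netFlow]
  refine sum_nonneg fun e _ => ?_
  by_cases hh : hd e ∈ R <;> by_cases ht : tl e ∈ R <;> simp only [hh, ht, if_true, if_false]
  · simp
  · rw [sub_zero]
    exact not_lt.mp fun hf => ht (hR _ _ ⟨e, .inr ⟨hf, rfl, rfl⟩⟩ hh)
  · rw [zero_sub, neg_nonneg]
    exact not_lt.mp fun hf => hh (hR _ _ ⟨e, .inl ⟨hf, rfl, rfl⟩⟩ ht)
  · simp

/-- Cut argument: otherwise the vertices reachable from `w` would have negative total net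
inflow although no flow leaves them. -/
theorem reflTransGen_flowStep_of_netFlow_neg [Fintype V] {f : E → ℝ} {v w : V}
    (hneg : ∀ u ≠ v, netFlow hd tl f u ≤ 0) (hw : netFlow hd tl f w < 0) :
    Relation.ReflTransGen (FlowStep hd tl f) w v := by
  classical
  by_contra hwv
  set R : Finset V := {x | Relation.ReflTransGen (FlowStep hd tl f) w x}
  have hwR : w ∈ R := by simp [R, Relation.ReflTransGen.refl]
  have hR_nonneg : 0 ≤ ∑ x ∈ R, netFlow hd tl f x :=
    sum_netFlow_nonneg_of_closed hd tl fun u u' h hu => by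
      simp only [R, mem_filter, mem_univ, true_and] at hu ⊢
      exact hu.tail h
  have hrest : ∑ x ∈ R.erase w, netFlow hd tl f x ≤ 0 :=
    sum_nonpos fun x hx => hneg x fun hxv => hwv (by
      simpa [R, hxv] using mem_of_mem_erase hx)
  rw [← add_sum_erase R _ hwR] at hR_nonneg
  linarith

theorem FlowStep.exists_single [DecidableEq E] {f : E → ℝ} {u u' : V}
    (h : FlowStep hd tl f u u') :
    ∃ e a, 0 < a * f e ∧ netFlow hd tl (Pi.single e a) = Pi.single u' 1 - Pi.single u 1 := by
  obtain ⟨e, ⟨hf, rfl, rfl⟩ | ⟨hf, rfl, rfl⟩⟩ := h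
  · exact ⟨e, 1, by simpa using hf, netFlow_single hd tl e 1⟩
  · refine ⟨e, -1, by simpa using hf, ?_⟩
    rw [netFlow_single, Pi.single_neg, Pi.single_neg]
    abel

theorem exists_conformal_path_flow [DecidableEq E] {f : E → ℝ} {u v : V}
    (h : Relation.ReflTransGen (FlowStep hd tl f) u v) :
    ∃ p : E → ℝ, (∀ e, 0 ≤ p e * f e) ∧ (∀ e, f e = 0 → p e = 0) ∧
      netFlow hd tl p = Pi.single v 1 - Pi.single u 1 := by
  induction h using Relation.ReflTransGen.head_induction_on with
  | refl => exact ⟨0, fun _ => by simp, fun _ _ => rfl, by simp⟩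
  | head hstep _ ih =>
    obtain ⟨p, hpf, hp0, hpnet⟩ := ih
    obtain ⟨e, a, hae, hnet⟩ := hstep.exists_single hd tl
    refine ⟨Pi.single e a + p, fun e' => ?_, fun e' he' => ?_, ?_⟩
    · rcases eq_or_ne e' e with rfl | he
      · simpa [add_mul] using add_nonneg hae.le (hpf e')
      · simpa [he] using hpf e'
    · rcases eq_or_ne e' e with rfl | he
      · simp [he'] at hae
      · simpa [he] using hp0 e' he'
    · rw [map_add, hnet, hpnet]
      abel

/-- Induction on the support of `f`: push flow along a path from `w` to `v` until either the
supply of `w` is used up or an edge of `f` is saturated. -/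
theorem exists_subflow_of_netFlow_nonpos [Fintype V] [DecidableEq E] {v w : V} (hwv : w ≠ v)
    {f : E → ℝ} (hneg : ∀ u ≠ v, netFlow hd tl f u ≤ 0) :
    ∃ h : E → ℝ, (∀ e, h e ∈ [[0, f e]]) ∧
      netFlow hd tl h = netFlow hd tl f w • (Pi.single w 1 - Pi.single v 1) := by
  obtain ⟨n, hn⟩ : ∃ n, #{e | f e ≠ 0} = n := ⟨_, rfl⟩
  induction n using Nat.strong_induction_on generalizing f with
  | _ n ih =>
  rcases (hneg w hwv).eq_or_lt with hw0 | hw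
  · exact ⟨0, by simp, by simp [hw0]⟩
  obtain ⟨p, hpf, hp0, hpnet⟩ := exists_conformal_path_flow hd tl
    (reflTransGen_flowStep_of_netFlow_neg hd tl hneg hw)
  obtain ⟨ε, hε, hεδ, hεf, hsat⟩ := exists_scaled_subflow hpf hp0 (neg_pos.2 hw)
  rcases hsat with rfl | ⟨e₀, hfe₀, he₀⟩
  · refine ⟨(-netFlow hd tl f w) • p, hεf, ?_⟩
    rw [map_smul, hpnet]
    module
  set f' := f - ε • p
  have hf'net : netFlow hd tl f' = netFlow hd tl f - ε • (Pi.single v 1 - Pi.single w 1) := by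
    rw [map_sub, map_smul, hpnet]
  have hf'w : netFlow hd tl f' w = netFlow hd tl f w + ε := by
    simp [hf'net, hwv]
  have hneg' : ∀ u ≠ v, netFlow hd tl f' u ≤ 0 := fun u hu => by
    rcases eq_or_ne u w with rfl | huw
    · linarith
    · simpa [hf'net, hu, huw] using hneg u hu
  have hsupp : ({e | f' e ≠ 0} : Finset E) ⊂ ({e | f e ≠ 0} : Finset E) := by
    have hsub : ({e | f' e ≠ 0} : Finset E) ⊆ ({e | f e ≠ 0} : Finset E) := fun e => by
      simp only [mem_filter, mem_univ, true_and]
      exact fun hf' hf => hf' (by simp [f', hf, hp0 e hf])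
    exact (ssubset_iff_of_subset hsub).2 ⟨e₀, by simpa using hfe₀, by simp [f', he₀]⟩
  obtain ⟨h', hh', hnet'⟩ := ih _ (hn ▸ card_lt_card hsupp) hneg' rfl
  refine ⟨ε • p + h', fun e => add_mem_uIcc_zero (hεf e) (hh' e), ?_⟩
  rw [map_add, map_smul, hpnet, hnet', hf'w]
  module

end Flows

section Supplies

variable {V : Type*} [Fintype V]

theorem neg_sum_le_card_mul_of_master {s : V → ℝ} {w : V} (hs : ∀ u, s u ≤ 0)
    (hw : ∀ u, |s u| ≤ |s w|) : -∑ u, s u ≤ #{u | s u < 0} * -s w := by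
  rw [← sum_filter_of_ne fun u _ hu => (hs u).lt_of_ne hu, ← sum_neg_distrib, ← nsmul_eq_mul]
  refine sum_le_card_nsmul _ _ _ fun u _ => ?_
  simpa [abs_of_nonpos (hs u), abs_of_nonpos (hs w)] using hw u

variable [DecidableEq V]

theorem assign_of_ne (s : V → ℝ) {v u : V} (h : u ≠ v) : assign s v u = s u := if_neg h

theorem assign_sub_assign (s : V → ℝ) (v w : V) :
    assign s v - assign s w = (-∑ u, s u) • (Pi.single v 1 - Pi.single w 1) := by
  ext x
  simp only [assign, Pi.sub_apply, Pi.smul_apply, Pi.single_apply, smul_eq_mul,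
    sum_erase_eq_sub (mem_univ _)]
  split_ifs <;> simp_all

end Supplies

theorem exists_reroute_to_master_source {V E : Type*} [Fintype V] [Fintype E] [DecidableEq V]
    [DecidableEq E] (hd tl : E → V) {s : V → ℝ} (hs : ∀ u, s u ≤ 0) {w : V}
    (hw : ∀ u, |s u| ≤ |s w|) {v : V} {l : ℝ} (hl : 0 ≤ l) {f : E → ℝ}
    (hf : netFlow hd tl f = l • assign s v) :
    ∃ g : E → ℝ, netFlow hd tl g = l • assign s w ∧
      ∀ e, |g e| ≤ max ((#{u | s u < 0} : ℝ) - 1) 1 * |f e| := by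
  set T := -∑ u, s u
  have hassign : assign s v = assign s w + T • (Pi.single v 1 - Pi.single w 1) :=
    eq_add_of_sub_eq' (assign_sub_assign s v w)
  by_cases htriv : w = v ∨ T = 0
  · refine ⟨f, ?_, fun e => le_mul_of_one_le_left (abs_nonneg _) (le_max_right _ _)⟩
    rcases htriv with rfl | hT
    · exact hf
    · simpa [hassign, hT] using hf
  obtain ⟨hwv, hT⟩ := not_or.1 htriv
  have hsw : s w < 0 := by
    refine (hs w).lt_of_ne fun hsw => hT ?_
    have hzero : ∀ u, s u = 0 := fun u => abs_nonpos_iff.1 (by simpa [hsw] using hw u)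
    simp [T, hzero]
  obtain ⟨h, hh, hnet⟩ := exists_subflow_of_netFlow_nonpos hd tl hwv (f := f) fun u hu => by
    simpa [hf, assign_of_ne s hu] using mul_nonpos_of_nonneg_of_nonpos hl (hs u)
  set α := T / -s w
  have hα : α * s w = -T := by
    simp only [α, div_neg, neg_mul, div_mul_cancel₀ _ hsw.ne]
  have hαcard : α ≤ #{u | s u < 0} :=
    (div_le_iff₀ (neg_pos.2 hsw)).2 (neg_sum_le_card_mul_of_master hs hw)
  refine ⟨f - α • h, ?_, fun e => ?_⟩
  · have hfw : netFlow hd tl f w = l * s w := by simp [hf, assign_of_ne s hwv]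
    rw [map_sub, map_smul, hnet, hfw, hf, hassign, smul_smul,
      show α * (l * s w) = -(l * T) by linear_combination l * hα]
    module
  · calc |f e - α * h e| ≤ max (α - 1) 1 * |f e| :=
          abs_sub_mul_le_of_mem_uIcc (hh e) <|
            div_nonneg (neg_nonneg.2 (sum_nonpos fun u _ => hs u)) (neg_nonneg.2 hsw.le)
      _ ≤ max ((#{u | s u < 0} : ℝ) - 1) 1 * |f e| := by gcongr

theorem master_source_approx_general {V E ι : Type*} [Fintype V] [Fintype E] [Fintype ι]
    [DecidableEq V]
    (hd tl : E → V) (c : E → ℝ)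
    (s : ι → V → ℝ) (hs : ∀ i v, s i v ≤ 0)
    (θ : ℕ) (hθ : θ = univ.sup (fun i : ι => (univ.filter (fun v => s i v < 0)).card))
    (w : ι → V) (hw : ∀ i v, |s i v| ≤ |s i (w i)|) :
    lamS hd tl c s / max ((θ : ℝ) - 1) 1
      ≤ lamD hd tl c (fun i => assign (s i) (w i)) := by
  classical
  set M := max ((θ : ℝ) - 1) 1
  have hM : 0 < M := one_pos.trans_le (le_max_right _ _)
  refine sSup_div_le_sSup hM (fun l hl => hl.1)
    (fun l ⟨hl, f, hcap, hsat⟩ => ⟨hl, w, f, hcap, hsat⟩) ?_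
  rintro l ⟨hl, v, f, hcap, hsat⟩
  have hreroute (i : ι) : ∃ g : E → ℝ, netFlow hd tl g = l • assign (s i) (w i) ∧
      ∀ e, |g e| ≤ M * |f i e| := by
    obtain ⟨g, hg, hgf⟩ :=
      exists_reroute_to_master_source hd tl (hs i) (hw i) hl ((satisfiesFlow_iff hd tl).1 (hsat i))
    have hcard : (#{u | s i u < 0} : ℝ) ≤ θ := by
      exact_mod_cast hθ ▸ le_sup (f := fun i => #{u | s i u < 0}) (mem_univ i)
    exact ⟨g, hg, fun e => (hgf e).trans <|
      mul_le_mul_of_nonneg_right (max_le_max (sub_le_sub_right hcard 1) le_rfl) (abs_nonneg _)⟩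
  choose g hg hgf using hreroute
  refine ⟨div_nonneg hl hM.le, fun i => M⁻¹ • g i, fun e => ?_, fun i => ?_⟩
  · refine (sum_le_sum fun i _ => ?_).trans (hcap e)
    change |M⁻¹ * g i e| ≤ |f i e|
    rw [abs_mul, abs_inv, abs_of_pos hM, inv_mul_le_iff₀ hM]
    exact hgf i e
  · rw [satisfiesFlow_iff, map_smul, hg, smul_smul, inv_mul_eq_div]
    rfl

/-- Theorem: choosing a master source `w i` (a vertex maximizing `|s i v|`) as
the target of each supply vector `s i` is a `max{θ-1,1}`-approximate solution
to LoMuF, where `θ` is the largest number of sources of any supply vector. -/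
theorem master_source_approx {V E ι : Type*} [Fintype V] [Fintype E] [Fintype ι]
    [DecidableEq V]
    (hd tl : E → V) (c : E → ℝ) (hc : ∀ e, 0 ≤ c e)
    (s : ι → V → ℝ) (hs : ∀ i v, s i v ≤ 0)
    (θ : ℕ) (hθ : θ = univ.sup (fun i : ι => (univ.filter (fun v => s i v < 0)).card))
    (w : ι → V) (hw : ∀ i v, |s i v| ≤ |s i (w i)|) :
    lamS hd tl c s / max ((θ : ℝ) - 1) 1
      ≤ lamD hd tl c (fun i => assign (s i) (w i)) :=
  master_source_approx_general hd tl c s hs θ hθ w hw
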